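/- Let V be a 3-dimensional oriented real inner product space, S : V → V self-adjoint, ω a unit vector, and η₂ a unit vector with ⟨ω, η₂⟩ = 0. Define C(ω)v = ω × v, Rot(ω) = Id + C(ω) + C(ω)², B(ω) = [S, C(ω)], and A(ω) = [S, Rot(ω)]. If B(ω) = μ (ω ⊙ η₂) for some real μ ≠ 0, then A(ω)³ = 0. -/

import Mathlib

open scoped RealInnerProductSpace

/-- The cross product on `ℝ³`. -/
noncomputable def cross3 (a b : EuclideanSpace ℝ (Fin 3)) : EuclideanSpace ℝ (Fin 3) :=
  WithLp.toLp 2 ![a 1 * b 2 - a 2 * b 1, a 2 * b 0 - a 0 * b 2, a 0 * b 1 - a 1 * b 0]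

/-- `Rot(ω) = Id + C(ω) + C(ω)²`, the rotation by `π/2` about `ω`. -/
noncomputable def RotQ (ω v : EuclideanSpace ℝ (Fin 3)) : EuclideanSpace ℝ (Fin 3) :=
  v + cross3 ω v + cross3 ω (cross3 ω v)

/-!
Since `Rot(ω) = 1 + C + C²`, the commutator `A = [S, Rot(ω)]` equals `B + C B + B C` with
`B = [S, C]`. Inserting `B = μ (ω ⊙ η₂)` and writing `η₃ = ω × η₂` gives
`A α = ⟪ω, α⟫ μ (η₂ + η₃) + ⟪μ (η₂ - η₃), α⟫ ω`. Now `A ω = μ (η₂ + η₃)`, and `A` kills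
`η₂ + η₃` because `η₂ - η₃ ⊥ η₂ + η₃` (as `‖η₃‖ = ‖η₂‖`); hence `A²` maps into the line
`ℝ (η₂ + η₃)` and `A³ = 0`.
-/

open Matrix WithLp

theorem Ring.lie_one_add_add_mul_self {R : Type*} [Ring R] (s c : R) :
    ⁅s, 1 + c + c * c⁆ = ⁅s, c⁆ + c * ⁅s, c⁆ + ⁅s, c⁆ * c := by
  simp only [Ring.lie_def]
  noncomm_ring

theorem EuclideanSpace.real_inner_eq_dotProduct {ι : Type*} [Fintype ι]
    (x y : EuclideanSpace ℝ ι) : ⟪x, y⟫ = ofLp x ⬝ᵥ ofLp y := by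
  rw [EuclideanSpace.inner_eq_star_dotProduct, star_trivial, dotProduct_comm]

theorem cross3_eq_toLp_crossProduct (a b : EuclideanSpace ℝ (Fin 3)) :
    cross3 a b = toLp 2 (ofLp a ⨯₃ ofLp b) := by
  rw [cross_apply]; rfl

noncomputable def cross3L (a : EuclideanSpace ℝ (Fin 3)) :
    Module.End ℝ (EuclideanSpace ℝ (Fin 3)) :=
  (WithLp.linearEquiv 2 ℝ (Fin 3 → ℝ)).symm.conj (crossProduct (ofLp a))

theorem cross3L_apply (a b : EuclideanSpace ℝ (Fin 3)) : cross3L a b = cross3 a b := by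
  rw [cross3_eq_toLp_crossProduct]; rfl

theorem RotQ_eq (ω v : EuclideanSpace ℝ (Fin 3)) :
    RotQ ω v = (1 + cross3L ω + cross3L ω * cross3L ω) v := by
  simp [RotQ, cross3L_apply]

theorem cross3_self (a : EuclideanSpace ℝ (Fin 3)) : cross3 a a = 0 := by
  simp [cross3_eq_toLp_crossProduct]

theorem inner_cross3_self_left (a b : EuclideanSpace ℝ (Fin 3)) : ⟪a, cross3 a b⟫ = 0 := by
  simp [cross3_eq_toLp_crossProduct, EuclideanSpace.real_inner_eq_dotProduct]

theorem inner_cross3_right (a b c : EuclideanSpace ℝ (Fin 3)) :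
    ⟪c, cross3 a b⟫ = -⟪cross3 a c, b⟫ := by
  simp only [cross3_eq_toLp_crossProduct, EuclideanSpace.real_inner_eq_dotProduct]
  rw [triple_product_permutation, triple_product_permutation, ← cross_anticomm c, neg_dotProduct,
    neg_neg, dotProduct_comm]

theorem inner_cross3_cross3 (a b c d : EuclideanSpace ℝ (Fin 3)) :
    ⟪cross3 a b, cross3 c d⟫ = ⟪a, c⟫ * ⟪b, d⟫ - ⟪a, d⟫ * ⟪b, c⟫ := by
  simp only [cross3_eq_toLp_crossProduct, EuclideanSpace.real_inner_eq_dotProduct,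
    cross_dot_cross]

theorem commutator_RotQ_apply (S : Module.End ℝ (EuclideanSpace ℝ (Fin 3)))
    (ω η : EuclideanSpace ℝ (Fin 3)) (μ : ℝ)
    (hB : ∀ α, S (cross3 ω α) - cross3 ω (S α) = μ • (⟪ω, α⟫ • η + ⟪η, α⟫ • ω))
    (α : EuclideanSpace ℝ (Fin 3)) :
    S (RotQ ω α) - RotQ ω (S α) =
      ⟪ω, α⟫ • (μ • (η + cross3 ω η)) + ⟪μ • (η - cross3 ω η), α⟫ • ω := by
  set C := cross3L ω
  have hSC : ∀ β, ⁅S, C⁆ β = μ • (⟪ω, β⟫ • η + ⟪η, β⟫ • ω) := by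
    simpa [Ring.lie_def, C, cross3L_apply] using hB
  have hRot : S (RotQ ω α) - RotQ ω (S α) = ⁅S, 1 + C + C * C⁆ α := by
    simp [RotQ_eq, Ring.lie_def, C]
  rw [hRot, Ring.lie_one_add_add_mul_self]
  simp only [LinearMap.add_apply, Module.End.mul_apply, hSC, C, cross3L_apply, map_add, map_smul,
    cross3_self, inner_cross3_self_left, inner_cross3_right, real_inner_smul_left, inner_sub_left]
  module

theorem apply_apply_apply_eq_zero_of_eq_inner_smul_add_inner_smul
    {E : Type*} [NormedAddCommGroup E] [InnerProductSpace ℝ E] {N : E → E} {ω u v : E}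
    (hωu : ⟪ω, u⟫ = 0) (hvu : ⟪v, u⟫ = 0) (hvω : ⟪v, ω⟫ = 0)
    (hN : ∀ α, N α = ⟪ω, α⟫ • u + ⟪v, α⟫ • ω) (α : E) : N (N (N α)) = 0 := by
  simp [hN, inner_add_right, inner_smul_right, hωu, hvu, hvω]

theorem stmt_12_general
    (S : EuclideanSpace ℝ (Fin 3) →ₗ[ℝ] EuclideanSpace ℝ (Fin 3))
    (ω η₂ : EuclideanSpace ℝ (Fin 3))
    (hω : ‖ω‖ = 1) (horth : ⟪ω, η₂⟫ = 0)
    (μ : ℝ)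
    (hB : ∀ α : EuclideanSpace ℝ (Fin 3),
      S (cross3 ω α) - cross3 ω (S α) = μ • (⟪ω, α⟫ • η₂ + ⟪η₂, α⟫ • ω))
    (A : EuclideanSpace ℝ (Fin 3) → EuclideanSpace ℝ (Fin 3))
    (hA : ∀ α, A α = S (RotQ ω α) - RotQ ω (S α)) :
    ∀ α, A (A (A α)) = 0 := by
  set η₃ := cross3 ω η₂
  have hωη₃ : ⟪ω, η₃⟫ = 0 := inner_cross3_self_left ω η₂
  have hη₃η₃ : ⟪η₃, η₃⟫ = ⟪η₂, η₂⟫ := by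
    rw [inner_cross3_cross3, real_inner_self_eq_norm_sq ω, hω, horth]
    ring
  have hωu : ⟪ω, μ • (η₂ + η₃)⟫ = 0 := by
    simp [inner_smul_right, inner_add_right, horth, hωη₃]
  have hvω : ⟪μ • (η₂ - η₃), ω⟫ = 0 := by
    rw [real_inner_comm]
    simp [inner_smul_right, inner_sub_right, horth, hωη₃]
  have hvu : ⟪μ • (η₂ - η₃), μ • (η₂ + η₃)⟫ = 0 := by
    simp only [inner_smul_left, inner_smul_right, inner_sub_left, inner_add_right, hη₃η₃,
      real_inner_comm η₂ η₃]
    ring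
  exact apply_apply_apply_eq_zero_of_eq_inner_smul_add_inner_smul hωu hvu hvω
    fun β => (hA β).trans (commutator_RotQ_apply S ω η₂ μ hB β)

/-- If `B(ω) = [S, C(ω)] = μ (ω ⊙ η₂)` with `μ ≠ 0`, then `A(ω)³ = 0`,
where `A(ω) = [S, Rot(ω)]`. -/
theorem stmt_12
    (S : EuclideanSpace ℝ (Fin 3) →ₗ[ℝ] EuclideanSpace ℝ (Fin 3))
    (hsym : LinearMap.IsSymmetric S)
    (ω η₂ : EuclideanSpace ℝ (Fin 3))
    (hω : ‖ω‖ = 1) (hη₂ : ‖η₂‖ = 1) (horth : ⟪ω, η₂⟫ = 0)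
    (μ : ℝ) (hμ : μ ≠ 0)
    (hB : ∀ α : EuclideanSpace ℝ (Fin 3),
      S (cross3 ω α) - cross3 ω (S α) = μ • (⟪ω, α⟫ • η₂ + ⟪η₂, α⟫ • ω))
    (A : EuclideanSpace ℝ (Fin 3) → EuclideanSpace ℝ (Fin 3))
    (hA : ∀ α, A α = S (RotQ ω α) - RotQ ω (S α)) :
    ∀ α, A (A (A α)) = 0 :=
  stmt_12_general S ω η₂ hω horth μ hB A hA
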